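/- Let x : ℕ → ℝ and c : ℕ → ℝ, and define sequences Δ, M by Δ₂ := sin x₂, M₂ := −cos x₂, and for N ≥ 3: Δ_N := (−cos x_N + c_N sin x_N) Δ_{N−1} + (sin x_N) M_{N−1} and M_N := (−sin x_N − c_N cos x_N) Δ_{N−1} − (cos x_N) M_{N−1}. Then for every N ≥ 2, M_N = Σ_{s=0}^{N−2} (−1)^{N+s+1} Σ_{2 = j₀ < j₁ < ⋯ < j_s ≤ N} ( ∏_{i=0}^{s−1} c_{j_{i+1}} · sin( x_{j_i} + x_{j_i + 1} + ⋯ + x_{j_{i+1} − 1} ) ) · cos( x_{j_s} + x_{j_s + 1} + ⋯ + x_N ), where the inner sum is over all strictly increasing integer tuples (j₀, j₁, …, j_s) with j₀ = 2 and j_s ≤ N, the empty product (s = 0) equals 1, and the s = 0 term is (−1)^{N+1} cos( x₂ + ⋯ + x_N ). -/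

import Mathlib

/-!
Write `A_s(N)` and `B_s(N)` for the inner sums over `2 = j₀ < ⋯ < j_s ≤ N` with the last factor
`sin` resp. `cos` of `x_{j_s} + ⋯ + x_N`. Splitting the tuples for `N + 1` according to whether
`j_s ≤ N` or `j_s = N + 1`, and applying the addition formulas to the last block, gives
`A_s(N+1) = cos x_{N+1} A_s(N) + sin x_{N+1} B_s(N) + c_{N+1} sin x_{N+1} A_{s-1}(N)` and
`B_s(N+1) = cos x_{N+1} B_s(N) - sin x_{N+1} A_s(N) + c_{N+1} cos x_{N+1} A_{s-1}(N)`,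
where `A_{-1} = 0`.
Hence the alternating sums `𝒜_N = ∑ (-1)^s A_s(N)` and `ℬ_N = ∑ (-1)^s B_s(N)` make
`((-1)^N 𝒜_N, -(-1)^N ℬ_N)` satisfy the recursion defining `(Δ_N, M_N)`.
-/

open Real Finset

/-- The pair `(Δ_N, M_N)` defined by `Δ₂ = sin x₂`, `M₂ = −cos x₂` and the recursion
`Δ_N = (−cos x_N + c_N sin x_N) Δ_{N−1} + (sin x_N) M_{N−1}`,
`M_N = (−sin x_N − c_N cos x_N) Δ_{N−1} − (cos x_N) M_{N−1}`. -/
noncomputable def DeltaM (x c : ℕ → ℝ) : ℕ → ℝ × ℝ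
  | 0 => (0, 0)
  | 1 => (0, 0)
  | 2 => (Real.sin (x 2), -Real.cos (x 2))
  | (n + 3) =>
      let pr := DeltaM x c (n + 2)
      ((-Real.cos (x (n + 3)) + c (n + 3) * Real.sin (x (n + 3))) * pr.1
          + Real.sin (x (n + 3)) * pr.2,
       (-Real.sin (x (n + 3)) - c (n + 3) * Real.cos (x (n + 3))) * pr.1
          - Real.cos (x (n + 3)) * pr.2)

open scoped Classical in
/-- Strictly increasing tuples `2 = j₀ < j₁ < ⋯ < j_s ≤ N`. -/
noncomputable def incrTuples (s N : ℕ) : Finset (Fin (s + 1) → Fin (N + 1)) :=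
  Finset.univ.filter (fun j => StrictMono j ∧ (j 0 : ℕ) = 2)

section

lemma sum_range_neg_one_pow_mul_of_shift {R : Type*} [CommRing R] {p q u : ℕ → R} {n : ℕ}
    (hp : p (n + 1) = 0) (h0 : u 0 = p 0) (hs : ∀ s, u (s + 1) = p (s + 1) + q s) :
    ∑ s ∈ range (n + 2), (-1) ^ s * u s = ∑ s ∈ range (n + 1), (-1) ^ s * (p s - q s) := by
  have hp' : ∑ s ∈ range (n + 2), (-1) ^ s * p s = ∑ s ∈ range (n + 1), (-1) ^ s * p s := by
    rw [sum_range_succ, hp, mul_zero, add_zero]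
  simp only [mul_sub, sum_sub_distrib]
  rw [← hp', sum_range_succ' _ (n + 1), sum_range_succ' (fun s => (-1) ^ s * p s)]
  simp only [hs, h0, mul_add, sum_add_distrib, pow_succ, mul_neg_one, neg_mul, sum_neg_distrib]
  ring

variable {s N : ℕ}

lemma mem_incrTuples {j : Fin (s + 1) → Fin (N + 1)} :
    j ∈ incrTuples s N ↔ StrictMono j ∧ (j 0 : ℕ) = 2 := by
  simp [incrTuples]

lemma incrTuples_eq_empty_of_lt (h : N < s + 2) : incrTuples s N = ∅ := by
  refine eq_empty_of_forall_notMem fun j hj => ?_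
  obtain ⟨hmono, h0⟩ := mem_incrTuples.1 hj
  have hbound : ∀ i : Fin (s + 1), (i : ℕ) + 2 ≤ j i := by
    intro i
    induction i using Fin.induction with
    | zero => simp [h0]
    | succ i ih =>
      have := hmono (Fin.castSucc_lt_succ (i := i))
      simp only [Fin.lt_def, Fin.val_castSucc, Fin.val_succ] at this ih ⊢
      omega
  have := hbound (Fin.last s)
  have := (j (Fin.last s)).isLt
  simp only [Fin.val_last] at *
  omega

lemma incrTuples_zero (h : 2 ≤ N) : incrTuples 0 N = {fun _ => ⟨2, by omega⟩} := by
  ext j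
  rw [mem_incrTuples, mem_singleton]
  constructor
  · rintro ⟨-, h0⟩
    funext i
    rw [Subsingleton.elim (α := Fin 1) i 0]
    exact Fin.ext h0
  · rintro rfl
    exact ⟨Fin.strictMono_iff_lt_succ.2 fun i => i.elim0, rfl⟩

lemma incrTuples_filter_last_ne :
    (incrTuples s (N + 1)).filter (fun j => j (Fin.last s) ≠ Fin.last (N + 1)) =
      (incrTuples s N).image (fun j => Fin.castSucc ∘ j) := by
  ext j
  simp only [mem_filter, mem_image, mem_incrTuples]
  constructor
  · rintro ⟨⟨hj, h0⟩, hlast⟩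
    have hle : ∀ i, (j i : ℕ) ≤ N := fun i => by
      have : j i ≤ j (Fin.last s) := hj.monotone (Fin.le_last i)
      rw [Fin.le_def] at this
      have := Fin.val_lt_last hlast
      omega
    refine ⟨fun i => Fin.clamp (j i) N, ⟨fun a b hab => ?_, ?_⟩, ?_⟩
    · have := hj hab
      simp only [Fin.lt_def, Fin.coe_clamp] at this ⊢
      have := hle a; have := hle b
      omega
    · have := hle 0
      simp only [Fin.coe_clamp]
      omega
    · funext i
      ext
      simp [hle i]
  · rintro ⟨j, ⟨hj, h0⟩, rfl⟩
    exact ⟨⟨(Fin.strictMono_castSucc).comp hj, h0⟩, Fin.castSucc_ne_last _⟩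

lemma incrTuples_succ_filter_last_eq :
    (incrTuples (s + 1) (N + 1)).filter (fun j => j (Fin.last (s + 1)) = Fin.last (N + 1)) =
      (incrTuples s N).image (fun j => Fin.snoc (Fin.castSucc ∘ j) (Fin.last (N + 1))) := by
  ext j
  simp only [mem_filter, mem_image, mem_incrTuples]
  constructor
  · rintro ⟨⟨hj, h0⟩, hlast⟩
    have hle : ∀ i : Fin (s + 1), (j i.castSucc : ℕ) ≤ N := fun i => by
      have := hj (Fin.castSucc_lt_last i)
      rw [hlast, Fin.lt_def, Fin.val_last] at this
      omega
    refine ⟨fun i => Fin.clamp (j i.castSucc) N, ⟨fun a b hab => ?_, ?_⟩, ?_⟩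
    · have := hj (Fin.castSucc_lt_castSucc_iff.2 hab)
      simp only [Fin.lt_def, Fin.coe_clamp] at this ⊢
      have := hle a; have := hle b
      omega
    · have := hle 0
      simp only [Fin.coe_clamp, Fin.castSucc_zero] at this h0 ⊢
      omega
    · funext i
      refine Fin.lastCases ?_ (fun i => ?_) i
      · simp [hlast]
      · ext
        simp [hle i]
  · rintro ⟨j, ⟨hj, h0⟩, rfl⟩
    refine ⟨⟨?_, ?_⟩, Fin.snoc_last _ _⟩
    · refine Fin.strictMono_iff_lt_succ.2 fun i => Fin.lastCases ?_ (fun i => ?_) i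
      · simp
      · rw [Fin.succ_castSucc, Fin.snoc_castSucc, Fin.snoc_castSucc]
        exact Fin.castSucc_lt_castSucc_iff.2 (hj Fin.castSucc_lt_succ)
    · rw [← Fin.castSucc_zero, Fin.snoc_castSucc]
      exact h0

lemma sum_incrTuples_succ_succ {β : Type*} [AddCommMonoid β] (F : (Fin (s + 2) → ℕ) → β) :
    ∑ j ∈ incrTuples (s + 1) (N + 1), F (Fin.val ∘ j) =
      ∑ j ∈ incrTuples (s + 1) N, F (Fin.val ∘ j) +
        ∑ j ∈ incrTuples s N, F (Fin.snoc (Fin.val ∘ j) (N + 1)) := by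
  rw [← sum_filter_not_add_sum_filter _ (fun j => j (Fin.last (s + 1)) = Fin.last (N + 1)),
    incrTuples_filter_last_ne, incrTuples_succ_filter_last_eq, sum_image, sum_image]
  · simp only [Fin.comp_snoc, Fin.val_last]
    rfl
  · exact fun a _ b _ h =>
      (Fin.castSucc_injective _).comp_left (Fin.snoc_left_injective (α := fun _ => Fin (N + 2)) _ h)
  · exact (Fin.castSucc_injective _).comp_left.injOn

lemma sum_incrTuples_zero_succ {β : Type*} [AddCommMonoid β] (hN : 2 ≤ N) (F : (Fin 1 → ℕ) → β) :
    ∑ j ∈ incrTuples 0 (N + 1), F (Fin.val ∘ j) = ∑ j ∈ incrTuples 0 N, F (Fin.val ∘ j) := by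
  rw [incrTuples_zero hN, incrTuples_zero (by omega), sum_singleton, sum_singleton]
  rfl

variable (x c : ℕ → ℝ)

noncomputable def chainWeight (j : Fin (s + 1) → ℕ) : ℝ :=
  ∏ i : Fin s, c (j i.succ) * sin (∑ m ∈ Icc (j i.castSucc) (j i.succ - 1), x m)

lemma chainWeight_snoc (j : Fin (s + 1) → ℕ) (a : ℕ) :
    chainWeight x c (Fin.snoc j a : Fin (s + 2) → ℕ) =
      chainWeight x c j * (c a * sin (∑ m ∈ Icc (j (Fin.last s)) (a - 1), x m)) := by
  rw [chainWeight, Fin.prod_univ_castSucc]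
  simp only [Fin.succ_castSucc, Fin.snoc_castSucc, Fin.succ_last, Fin.snoc_last]
  rfl

/-- The last block `x_{j_s} + ⋯ + x_M` may run past the bound `N` on the tuples, so that it can be
extended one index at a time. -/
noncomputable def chainSum (f : ℝ → ℝ) (s N M : ℕ) : ℝ :=
  ∑ j ∈ incrTuples s N, chainWeight x c (Fin.val ∘ j) * f (∑ m ∈ Icc (j (Fin.last s) : ℕ) M, x m)

noncomputable def altChainSum (f : ℝ → ℝ) (N : ℕ) : ℝ :=
  ∑ s ∈ range (N - 1), (-1) ^ s * chainSum x c f s N N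

variable {x c}

lemma chainSum_zero_succ (f : ℝ → ℝ) (M : ℕ) (hN : 2 ≤ N) :
    chainSum x c f 0 (N + 1) M = chainSum x c f 0 N M :=
  sum_incrTuples_zero_succ hN fun v => chainWeight x c v * f (∑ m ∈ Icc (v (Fin.last 0)) M, x m)

lemma chainSum_succ_succ (f : ℝ → ℝ) (M : ℕ) :
    chainSum x c f (s + 1) (N + 1) M =
      chainSum x c f (s + 1) N M +
        c (N + 1) * f (∑ m ∈ Icc (N + 1) M, x m) * chainSum x c sin s N N := by
  refine (sum_incrTuples_succ_succ
    fun v => chainWeight x c v * f (∑ m ∈ Icc (v (Fin.last (s + 1))) M, x m)).trans ?_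
  rw [chainSum, chainSum, mul_sum]
  congr 1
  refine sum_congr rfl fun j _ => ?_
  simp only [chainWeight_snoc, Fin.snoc_last, Nat.add_sub_cancel, Function.comp_apply]
  ring

lemma chainSum_sin_succ_right :
    chainSum x c sin s N (N + 1) =
      cos (x (N + 1)) * chainSum x c sin s N N + sin (x (N + 1)) * chainSum x c cos s N N := by
  rw [chainSum, chainSum, chainSum, mul_sum, mul_sum, ← sum_add_distrib]
  refine sum_congr rfl fun j _ => ?_
  rw [sum_Icc_succ_top (by omega), sin_add]
  ring

lemma chainSum_cos_succ_right :
    chainSum x c cos s N (N + 1) =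
      cos (x (N + 1)) * chainSum x c cos s N N - sin (x (N + 1)) * chainSum x c sin s N N := by
  rw [chainSum, chainSum, chainSum, mul_sum, mul_sum, ← sum_sub_distrib]
  refine sum_congr rfl fun j _ => ?_
  rw [sum_Icc_succ_top (by omega), cos_add]
  ring

lemma chainSum_eq_zero_of_lt (f : ℝ → ℝ) (M : ℕ) (h : N < s + 2) : chainSum x c f s N M = 0 := by
  rw [chainSum, incrTuples_eq_empty_of_lt h, sum_empty]

lemma altChainSum_succ_eq (f : ℝ → ℝ) (hN : 2 ≤ N) :
    altChainSum x c f (N + 1) = ∑ s ∈ range (N - 1), (-1) ^ s *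
      (chainSum x c f s N (N + 1) - c (N + 1) * f (x (N + 1)) * chainSum x c sin s N N) := by
  obtain ⟨n, rfl⟩ := Nat.exists_eq_add_of_le' hN
  rw [altChainSum, show n + 2 + 1 - 1 = n + 2 from rfl, show n + 2 - 1 = n + 1 from rfl]
  exact sum_range_neg_one_pow_mul_of_shift (u := fun s => chainSum x c f s (n + 2 + 1) (n + 2 + 1))
    (p := fun s => chainSum x c f s (n + 2) (n + 2 + 1)) (chainSum_eq_zero_of_lt _ _ (by omega))
    (chainSum_zero_succ _ _ hN) fun s => by rw [chainSum_succ_succ, Icc_self, sum_singleton]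

lemma altChainSum_sin_succ (hN : 2 ≤ N) :
    altChainSum x c sin (N + 1) =
      (cos (x (N + 1)) - c (N + 1) * sin (x (N + 1))) * altChainSum x c sin N +
        sin (x (N + 1)) * altChainSum x c cos N := by
  rw [altChainSum_succ_eq _ hN, altChainSum, altChainSum, mul_sum, mul_sum, ← sum_add_distrib]
  refine sum_congr rfl fun s _ => ?_
  rw [chainSum_sin_succ_right]
  ring

lemma altChainSum_cos_succ (hN : 2 ≤ N) :
    altChainSum x c cos (N + 1) =
      cos (x (N + 1)) * altChainSum x c cos N -
        (sin (x (N + 1)) + c (N + 1) * cos (x (N + 1))) * altChainSum x c sin N := by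
  rw [altChainSum_succ_eq _ hN, altChainSum, altChainSum, mul_sum, mul_sum, ← sum_sub_distrib]
  refine sum_congr rfl fun s _ => ?_
  rw [chainSum_cos_succ_right]
  ring

lemma DeltaM_succ (hN : 2 ≤ N) :
    DeltaM x c (N + 1) =
      ((-cos (x (N + 1)) + c (N + 1) * sin (x (N + 1))) * (DeltaM x c N).1 +
          sin (x (N + 1)) * (DeltaM x c N).2,
        (-sin (x (N + 1)) - c (N + 1) * cos (x (N + 1))) * (DeltaM x c N).1 -
          cos (x (N + 1)) * (DeltaM x c N).2) := by
  obtain ⟨n, rfl⟩ := Nat.exists_eq_add_of_le' hN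
  rfl

lemma DeltaM_eq_altChainSum (hN : 2 ≤ N) :
    DeltaM x c N = ((-1) ^ N * altChainSum x c sin N, -(-1) ^ N * altChainSum x c cos N) := by
  induction N, hN using Nat.le_induction with
  | base =>
    simp [DeltaM, altChainSum, chainSum, incrTuples_zero, chainWeight]
  | succ N hN ih =>
    rw [DeltaM_succ hN, ih, altChainSum_sin_succ hN, altChainSum_cos_succ hN]
    ext <;> simp only <;> ring

end

/-- the closed-form expansion of `M_N` as a signed sum over strictly
increasing tuples `2 = j₀ < j₁ < ⋯ < j_s ≤ N`. -/
theorem stmt_10 (x c : ℕ → ℝ) :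
    ∀ N : ℕ, 2 ≤ N →
      (DeltaM x c N).2 =
        ∑ s ∈ Finset.range (N - 1), (-1 : ℝ)^(N + s + 1) *
          ∑ j ∈ incrTuples s N,
            (∏ i : Fin s, c (j i.succ) *
                Real.sin (∑ m ∈ Finset.Icc (j i.castSucc : ℕ) ((j i.succ : ℕ) - 1), x m))
              * Real.cos (∑ m ∈ Finset.Icc (j (Fin.last s) : ℕ) N, x m) := by
  intro N hN
  simp only [DeltaM_eq_altChainSum hN]
  rw [altChainSum, mul_sum]
  refine sum_congr rfl fun s _ => ?_
  rw [show (-1 : ℝ) ^ (N + s + 1) = -(-1) ^ N * (-1) ^ s by ring, mul_assoc]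
  rfl
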